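/- arXiv:1806.06256 — 5 statements merged into one kernel-verified Lean document; each statement's English description precedes it below -/
import Mathlib

section
/- If z_1, ..., z_n are distinct infinite binary words with radix sort tree having leaves y_1, ..., y_n (indexed so that y_i is a prefix of z_i), then for any permutation σ of {1,...,n}, the sequence z_{σ(1)}, ..., z_{σ(n)} is increasing in the lexicographic order if and only if y_{σ(1)}, ..., y_{σ(n)} is increasing in the lexicographic order. -/
/-- The finite word `u` is a prefix of the infinite word `z`. -/
def IsPrefInf (u : List Bool) (z : ℕ → Bool) : Prop :=
  ∀ i : Fin u.length, u.get i = z i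

/-- Strict lexicographic order on infinite binary words (with `false < true`). -/
def InfLex (z z' : ℕ → Bool) : Prop :=
  ∃ k : ℕ, (∀ i < k, z i = z' i) ∧ z k = false ∧ z' k = true

/-!
Two incomparable finite words first differ at a position where both are defined; there the
infinite words they are prefixes of differ as well, so both pairs are ordered by the same letter.
The distinguishing prefixes `y i`, `y j` are incomparable: were `y i` a prefix of `y j`, it would
be a prefix of `z j`.
-/

namespace IsPrefInf

theorem cons_iff {a : Bool} {u : List Bool} {z : ℕ → Bool} :
    IsPrefInf (a :: u) z ↔ z 0 = a ∧ IsPrefInf u (fun k => z (k + 1)) := by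
  constructor
  · intro h
    exact ⟨(h ⟨0, Nat.succ_pos _⟩).symm, fun i => h ⟨i + 1, Nat.succ_lt_succ i.2⟩⟩
  · rintro ⟨h0, h⟩ ⟨i, hi⟩
    cases i with
    | zero => exact h0.symm
    | succ i => exact h ⟨i, Nat.lt_of_succ_lt_succ hi⟩

theorem of_prefix {u v : List Bool} {z : ℕ → Bool} (huv : u <+: v) (hv : IsPrefInf v z) :
    IsPrefInf u z := fun i => by
  simpa only [List.get_eq_getElem, huv.getElem i.2] using hv ⟨i, i.2.trans_le huv.length_le⟩

end IsPrefInf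

theorem infLex_iff {z z' : ℕ → Bool} :
    InfLex z z' ↔ z 0 < z' 0 ∨ z 0 = z' 0 ∧ InfLex (fun k => z (k + 1)) (fun k => z' (k + 1)) := by
  constructor
  · rintro ⟨_ | k, hk, h0, h1⟩
    · exact Or.inl (Bool.lt_iff.mpr ⟨h0, h1⟩)
    · exact Or.inr ⟨hk 0 k.succ_pos, k, fun i hi => hk (i + 1) (Nat.succ_lt_succ hi), h0, h1⟩
  · rintro (h | ⟨h, k, hk, h0, h1⟩)
    · exact ⟨0, fun i hi => absurd hi i.not_lt_zero, Bool.lt_iff.mp h⟩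
    · refine ⟨k + 1, fun i hi => ?_, h0, h1⟩
      cases i with
      | zero => exact h
      | succ i => exact hk i (Nat.lt_of_succ_lt_succ hi)

theorem infLex_iff_lex_of_not_prefix {u v : List Bool} {z z' : ℕ → Bool}
    (hu : IsPrefInf u z) (hv : IsPrefInf v z') (huv : ¬u <+: v) (hvu : ¬v <+: u) :
    InfLex z z' ↔ List.Lex (· < ·) u v := by
  induction u generalizing v z z' with
  | nil => exact absurd List.nil_prefix huv
  | cons a u ih =>
    cases v with
    | nil => exact absurd List.nil_prefix hvu
    | cons b v =>
      rw [IsPrefInf.cons_iff] at hu hv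
      obtain ⟨rfl, hu⟩ := hu
      obtain ⟨rfl, hv⟩ := hv
      rw [infLex_iff, List.cons_lex_cons_iff]
      refine or_congr Iff.rfl (and_congr_right fun hab => ih hu hv ?_ ?_)
      · exact fun h => huv (List.cons_prefix_cons.mpr ⟨hab, h⟩)
      · exact fun h => hvu (List.cons_prefix_cons.mpr ⟨hab.symm, h⟩)

theorem lex_order_iff_general {n : ℕ}
    (z : Fin n → ℕ → Bool)
    (y : Fin n → List Bool)
    (hpref : ∀ i, IsPrefInf (y i) (z i))
    (hdist : ∀ i j, j ≠ i → ¬ IsPrefInf (y i) (z j))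
    (σ : Equiv.Perm (Fin n)) :
    (∀ a b : Fin n, a < b → InfLex (z (σ a)) (z (σ b))) ↔
      (∀ a b : Fin n, a < b → List.Lex (· < ·) (y (σ a)) (y (σ b))) := by
  have hpair : ∀ i j, i ≠ j → (InfLex (z i) (z j) ↔ List.Lex (· < ·) (y i) (y j)) :=
    fun i j hij => infLex_iff_lex_of_not_prefix (hpref i) (hpref j)
      (fun h => hdist i j hij.symm ((hpref j).of_prefix h))
      (fun h => hdist j i hij ((hpref i).of_prefix h))
  exact forall₂_congr fun a b => imp_congr_right fun hab => hpair _ _ (σ.injective.ne hab.ne)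

/-- If `y i` is the minimal distinguishing prefix of `z i`, then for any permutation `σ`,
the sequence `z ∘ σ` is increasing in the lexicographic order iff `y ∘ σ` is. -/
theorem lex_order_iff {n : ℕ}
    (z : Fin n → ℕ → Bool) (hz : Function.Injective z)
    (y : Fin n → List Bool)
    (hpref : ∀ i, IsPrefInf (y i) (z i))
    (hdist : ∀ i j, j ≠ i → ¬ IsPrefInf (y i) (z j))
    (hmin : ∀ i, ∀ u : List Bool, IsPrefInf u (z i) →
      (∀ j, j ≠ i → ¬ IsPrefInf u (z j)) → (y i).length ≤ u.length)
    (σ : Equiv.Perm (Fin n)) :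
    (∀ a b : Fin n, a < b → InfLex (z (σ a)) (z (σ b))) ↔
      (∀ a b : Fin n, a < b → List.Lex (· < ·) (y (σ a)) (y (σ b))) :=
  lex_order_iff_general z y hpref hdist σ
end

section
/- A binary tree s with at least two leaves arises as a radix sort tree (i.e., all its leaves are pairwise prefix-incomparable minimal distinguishing prefixes) if and only if for every leaf u_1...u_p of s, the word u_1...u_{p-1} ū_p (obtained by flipping the last bit) is also a vertex of s. -/
/-- A set of finite binary words is prefix-closed. -/
def PrefixClosed (t : Set (List Bool)) : Prop :=
  ∀ v ∈ t, ∀ u : List Bool, u <+: v → u ∈ t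

/-- `v` is a leaf of the finite tree `t`: it belongs to `t` and has no proper extension in `t`. -/
def IsTreeLeaf (t : Finset (List Bool)) (v : List Bool) : Prop :=
  v ∈ t ∧ ∀ w ∈ t, v <+: w → w = v

/-- The number of leaves of a finite tree. -/
def leafCount (t : Finset (List Bool)) : ℕ :=
  (t.filter fun v => ∀ w ∈ t, v <+: w → w = v).card

/-- A full binary tree: nonempty, prefix-closed, and every non-leaf vertex has both children. -/
def FullBinTree (t : Finset (List Bool)) : Prop :=
  t.Nonempty ∧ PrefixClosed ↑t ∧
    ∀ v ∈ t, (v ++ [false] ∈ t ∨ v ++ [true] ∈ t) →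
      (v ++ [false] ∈ t ∧ v ++ [true] ∈ t)
/-- The radix sort tree determined by the distinct infinite binary words `z 0, ..., z (n-1)`:
the prefix closure of the minimal distinguishing prefixes `y i`.  A word `u` belongs to it
iff `u` is a prefix of some `z i` and either `u` is empty or its parent `u.dropLast` fails
to distinguish `z i` from all other inputs (equivalently, `u` is a prefix of `y i`). -/
def RTree {n : ℕ} (z : Fin n → ℕ → Bool) : Set (List Bool) :=
  {u | ∃ i, IsPrefInf u (z i) ∧
    (u = [] ∨ ∃ j, j ≠ i ∧ IsPrefInf u.dropLast (z j))}

/-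
Necessity: a leaf `u ++ [b]` of `RTree z` is a prefix of some `z i` whose parent `u` is also a
prefix of another input `z j`. If `z j` continued `u` with `b`, then `u ++ [b]` would still fail
to separate `z i` from `z j` and would have a child in the tree; so `z j` continues with `!b`, and
`u ++ [!b]` is a vertex.

Sufficiency: pad every leaf of `s` with `false`s to an infinite word. The leaves form a prefix
antichain, so these words are distinct and a leaf is a prefix of no other leaf's padding. The
sibling condition gives, for each leaf `v ++ [d]`, a second leaf below `v ++ [!d]`, so every
vertex lies in the radix sort tree; conversely a vertex of the radix sort tree strictly below a
leaf `l` would force `l` to be a prefix of another leaf's padding.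
-/

lemma isPrefInf_iff {u : List Bool} {z : ℕ → Bool} :
    IsPrefInf u z ↔ ∀ k (hk : k < u.length), u[k] = z k :=
  ⟨fun h k hk => h ⟨k, hk⟩, fun h i => h i i.isLt⟩

lemma IsPrefInf.of_prefix_s6 {u v : List Bool} {z : ℕ → Bool} (huv : u <+: v)
    (hv : IsPrefInf v z) : IsPrefInf u z := by
  rw [isPrefInf_iff] at *
  intro k hk
  rw [huv.getElem hk]
  exact hv k (hk.trans_le huv.length_le)

lemma isPrefInf_append_singleton {u : List Bool} {b : Bool} {z : ℕ → Bool} :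
    IsPrefInf (u ++ [b]) z ↔ IsPrefInf u z ∧ z u.length = b := by
  simp only [isPrefInf_iff, List.length_append, List.length_singleton,
    Nat.lt_succ_iff_lt_or_eq]
  constructor
  · intro h
    refine ⟨fun k hk => ?_, by simpa using (h u.length (Or.inr rfl)).symm⟩
    rw [← h k (Or.inl hk), List.getElem_append_left hk]
  · rintro ⟨hu, rfl⟩ k (hk | rfl)
    · rw [List.getElem_append_left hk, hu k hk]
    · simp

lemma IsPrefInf.prefix_of_length_le {u v : List Bool} {z : ℕ → Bool} (hu : IsPrefInf u z)
    (hv : IsPrefInf v z) (hlen : u.length ≤ v.length) : u <+: v := by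
  rw [isPrefInf_iff] at hu hv
  rw [List.prefix_iff_eq_take]
  refine List.ext_getElem (by simp [hlen]) fun k hk _ => ?_
  rw [List.getElem_take, hu k hk, hv k (hk.trans_le hlen)]

lemma IsPrefInf.prefix_or_prefix {u v : List Bool} {z : ℕ → Bool} (hu : IsPrefInf u z)
    (hv : IsPrefInf v z) : u <+: v ∨ v <+: u :=
  (le_total u.length v.length).imp (hu.prefix_of_length_le hv) (hv.prefix_of_length_le hu)

lemma append_singleton_mem_rTree_iff {n : ℕ} {z : Fin n → ℕ → Bool} {u : List Bool}
    {b : Bool} :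
    u ++ [b] ∈ RTree z ↔
      ∃ i, IsPrefInf (u ++ [b]) (z i) ∧ ∃ j, j ≠ i ∧ IsPrefInf u (z j) := by
  simp [RTree]

theorem sibling_mem_rTree {n : ℕ} {z : Fin n → ℕ → Bool} {u : List Bool} {b : Bool}
    (hv : u ++ [b] ∈ RTree z) (hleaf : ∀ c, u ++ [b] ++ [c] ∉ RTree z) :
    u ++ [!b] ∈ RTree z := by
  obtain ⟨i, hi, j, hji, hj⟩ := append_singleton_mem_rTree_iff.1 hv
  have hjb : z j u.length = !b := by
    refine Bool.eq_not.2 fun hjb => hleaf (z i (u ++ [b]).length) ?_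
    exact append_singleton_mem_rTree_iff.2 ⟨i, isPrefInf_append_singleton.2 ⟨hi, rfl⟩, j, hji,
      isPrefInf_append_singleton.2 ⟨hj, hjb⟩⟩
  exact append_singleton_mem_rTree_iff.2 ⟨j, isPrefInf_append_singleton.2 ⟨hj, hjb⟩, i,
    hji.symm, hi.of_prefix_s6 (List.prefix_append _ _)⟩

lemma IsTreeLeaf.append_singleton_not_mem {s : Finset (List Bool)} {v : List Bool}
    (hv : IsTreeLeaf s v) (c : Bool) : v ++ [c] ∉ s := fun hc => by
  simpa using congrArg List.length (hv.2 _ hc (List.prefix_append v [c]))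

lemma exists_isTreeLeaf_prefix {s : Finset (List Bool)} {u : List Bool} (hu : u ∈ s) :
    ∃ l, IsTreeLeaf s l ∧ u <+: l := by
  obtain ⟨l, hl, hmax⟩ :=
    Finset.exists_max_image (s.filter (u <+: ·)) List.length ⟨u, by simp [hu]⟩
  rw [Finset.mem_filter] at hl
  refine ⟨l, ⟨hl.1, fun w hw hlw => ?_⟩, hl.2⟩
  have hw' : w ∈ s.filter (u <+: ·) := Finset.mem_filter.2 ⟨hw, hl.2.trans hlw⟩
  exact (hlw.eq_of_length (hlw.length_le.antisymm (hmax w hw'))).symm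

def pad (v : List Bool) : ℕ → Bool := fun k => v.getD k false

lemma isPrefInf_pad_of_prefix {u v : List Bool} (h : u <+: v) : IsPrefInf u (pad v) := by
  rw [isPrefInf_iff]
  intro k hk
  rw [h.getElem hk, pad, List.getD_eq_getElem _ _ (hk.trans_le h.length_le)]

lemma IsTreeLeaf.eq_of_isPrefInf_pad {s : Finset (List Bool)} {l m : List Bool}
    (hl : IsTreeLeaf s l) (hm : IsTreeLeaf s m) (h : IsPrefInf l (pad m)) : l = m :=
  (h.prefix_or_prefix (isPrefInf_pad_of_prefix (List.prefix_refl m))).elim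
    (fun hlm => (hl.2 m hm.1 hlm).symm) (fun hml => hm.2 l hl.1 hml)

section PaddedLeaves

variable {s : Finset (List Bool)} {n : ℕ} {l : Fin n → List Bool}

lemma injective_pad_comp (hl : ∀ i, IsTreeLeaf s (l i)) (hinj : l.Injective) :
    (pad ∘ l).Injective := fun i j hij => by
  have hpad : pad (l i) = pad (l j) := hij
  exact hinj <|
    (hl i).eq_of_isPrefInf_pad (hl j) (hpad ▸ isPrefInf_pad_of_prefix (List.prefix_refl _))

lemma rTree_pad_comp_subset (hpc : PrefixClosed ↑s) (hl : ∀ i, IsTreeLeaf s (l i))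
    (hinj : l.Injective) : RTree (pad ∘ l) ⊆ ↑s := by
  intro u hu
  obtain rfl | ⟨u', c, rfl⟩ := u.eq_nil_or_concat
  · obtain ⟨i, -⟩ := hu
    exact hpc _ (hl i).1 [] List.nil_prefix
  rw [List.concat_eq_append] at hu ⊢
  obtain ⟨i, hi, j, hji, hj⟩ := append_singleton_mem_rTree_iff.1 hu
  rcases hi.prefix_or_prefix (isPrefInf_pad_of_prefix (List.prefix_refl (l i))) with hul | hlu
  · exact hpc _ (hl i).1 _ hul
  rcases List.prefix_concat_iff.1 hlu with heq | hlu'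
  · exact heq ▸ (hl i).1
  · exact absurd (hinj ((hl i).eq_of_isPrefInf_pad (hl j) (hj.of_prefix_s6 hlu'))).symm hji

lemma subset_rTree_pad_comp
    (hsib : ∀ v ∈ s, IsTreeLeaf s v →
      ∀ (u : List Bool) (b : Bool), v = u ++ [b] → u ++ [!b] ∈ s)
    (hsurj : ∀ v, IsTreeLeaf s v → ∃ i, l i = v) : ↑s ⊆ RTree (pad ∘ l) := by
  intro u hu
  obtain ⟨v, hv, huv⟩ := exists_isTreeLeaf_prefix hu
  obtain ⟨i, rfl⟩ := hsurj v hv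
  obtain rfl | ⟨u', c, rfl⟩ := u.eq_nil_or_concat
  · exact ⟨i, isPrefInf_pad_of_prefix huv, Or.inl rfl⟩
  obtain ⟨v', d, hvd⟩ := (l i).eq_nil_or_concat.resolve_left fun h => by simp_all
  rw [List.concat_eq_append] at hvd huv ⊢
  obtain ⟨w, hw, hsw⟩ := exists_isTreeLeaf_prefix (hsib _ hv.1 hv v' d hvd)
  obtain ⟨j, rfl⟩ := hsurj w hw
  have hji : l j ≠ l i := fun h => by
    rw [h, hvd] at hsw
    simpa using hsw.eq_of_length (by simp)
  have hu'v' : u' <+: v' := by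
    rw [hvd] at huv
    exact (List.prefix_concat_iff.1 huv).elim
      (fun h => (List.append_inj' h rfl).1 ▸ List.prefix_refl u')
      (List.prefix_append u' [c]).trans
  have hu'w : u' <+: l j := hu'v'.trans ((List.prefix_append _ _).trans hsw)
  exact append_singleton_mem_rTree_iff.2 ⟨i, isPrefInf_pad_of_prefix huv, j,
    fun h => hji (congrArg l h), isPrefInf_pad_of_prefix hu'w⟩

end PaddedLeaves

theorem radixSortTree_characterization_general (s : Finset (List Bool))
    (hpc : PrefixClosed ↑s) :
    (∃ (n : ℕ) (z : Fin n → ℕ → Bool), Function.Injective z ∧ ↑s = RTree z) ↔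
      (∀ v ∈ s, IsTreeLeaf s v →
        ∀ (u : List Bool) (b : Bool), v = u ++ [b] → u ++ [!b] ∈ s) := by
  constructor
  · rintro ⟨n, z, -, hz⟩ v hv hleaf u b rfl
    rw [← Finset.mem_coe, hz] at hv ⊢
    refine sibling_mem_rTree hv fun c hc => hleaf.append_singleton_not_mem c ?_
    rwa [← Finset.mem_coe, hz]
  · intro hsib
    let e := (s.filter fun v => ∀ w ∈ s, v <+: w → w = v).equivFin
    let l : Fin _ → List Bool := fun i => e.symm i
    have hl : ∀ i, IsTreeLeaf s (l i) := fun i => Finset.mem_filter.1 (e.symm i).2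
    have hinj : l.Injective := Subtype.val_injective.comp e.symm.injective
    have hsurj : ∀ v, IsTreeLeaf s v → ∃ i, l i = v :=
      fun v hv => ⟨e ⟨v, Finset.mem_filter.2 hv⟩, by simp [l]⟩
    exact ⟨_, pad ∘ l, injective_pad_comp hl hinj,
      (subset_rTree_pad_comp hsib hsurj).antisymm (rTree_pad_comp_subset hpc hl hinj)⟩

/-- A binary tree `s` with at least two leaves arises as a radix sort tree of distinct
infinite binary words if and only if for every leaf `u ++ [b]` of `s` the sibling word
`u ++ [!b]` is also a vertex of `s`. -/
theorem radixSortTree_characterization (s : Finset (List Bool))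
    (hne : s.Nonempty) (hpc : PrefixClosed ↑s) (hleaves : 2 ≤ leafCount s) :
    (∃ (n : ℕ) (z : Fin n → ℕ → Bool), Function.Injective z ∧ ↑s = RTree z) ↔
      (∀ v ∈ s, IsTreeLeaf s v →
        ∀ (u : List Bool) (b : Bool), v = u ++ [b] → u ++ [!b] ∈ s) :=
  radixSortTree_characterization_general s hpc
end

section
/- The PATRICIA contraction Φ maps the set S_n of radix sort trees with n leaves onto the set S̄_n of full binary trees with n leaves, and Φ preserves the number of leaves. -/
/-- The class of radix sort trees: either the trivial tree `{∅}` or a nonempty,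
prefix-closed finite binary tree with at least two leaves in which the sibling of
every leaf is also a vertex. -/
def RadixTree (s : Finset (List Bool)) : Prop :=
  s.Nonempty ∧ PrefixClosed ↑s ∧
    (s = {([] : List Bool)} ∨
      (2 ≤ leafCount s ∧ ∀ v ∈ s, IsTreeLeaf s v →
        ∀ (u : List Bool) (b : Bool), v = u ++ [b] → u ++ [!b] ∈ s))

/-- The PATRICIA address of a vertex `v` of `s`: the word recording, for every strict
ancestor of `v` that has out-degree 2 in `s`, the next letter of `v` after it.  This
realizes the deletion of all out-degree-1 vertices. -/
def contract (s : Finset (List Bool)) (v : List Bool) : List Bool :=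
  (List.range v.length).filterMap fun k =>
    if (v.take k ++ [false]) ∈ s ∧ (v.take k ++ [true]) ∈ s then v[k]? else none

/-- The PATRICIA contraction `Φ` of a tree `s`: the image under `contract s` of the
vertices of `s` of out-degree 0 or 2. -/
def patricia (s : Finset (List Bool)) : Finset (List Bool) :=
  (s.filter fun v =>
      (∀ w ∈ s, v <+: w → w = v) ∨
        ((v ++ [false]) ∈ s ∧ (v ++ [true]) ∈ s)).image (contract s)

/-!
`contract s v` keeps the letters of `v` read right after a branch point of `s`. It is monotone
for `<+:`, and it sends incomparable vertices of `s` to incomparable words, because they part at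
a branch point. So for prefix-closed `s`, `patricia s` is the image of all of `s`: it is closed
under prefixes, every parent in it is the image of a branch point and so has both children, and
the leaves of `s` go bijectively onto its leaves. On a full binary tree `contract` is the
identity, so a full binary tree is a radix sort tree that `patricia` fixes.
-/

theorem exists_concat_prefix_of_prefix_of_ne {α : Type*} {u w : List α} (h : u <+: w)
    (hne : u ≠ w) : ∃ a, u ++ [a] <+: w := by
  obtain ⟨r, rfl⟩ := h
  cases r with
  | nil => simp at hne
  | cons a r => exact ⟨a, by simp⟩

theorem exists_fork_of_not_prefix {α : Type*} :
    ∀ {v v' : List α}, ¬ v <+: v' → ¬ v' <+: v →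
      ∃ p a b, a ≠ b ∧ p ++ [a] <+: v ∧ p ++ [b] <+: v'
  | [], _, h, _ => absurd List.nil_prefix h
  | _, [], _, h' => absurd List.nil_prefix h'
  | a :: v, b :: v', h, h' => by
    by_cases hab : a = b
    · subst hab
      obtain ⟨p, c, d, hcd, hp, hp'⟩ :=
        exists_fork_of_not_prefix (v := v) (v' := v') (by simpa using h) (by simpa using h')
      exact ⟨a :: p, c, d, hcd, by simpa using hp, by simpa using hp'⟩
    · exact ⟨[], a, b, hab, by simp, by simp⟩

def IsBranchPoint (s : Finset (List Bool)) (v : List Bool) : Prop :=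
  v ++ [false] ∈ s ∧ v ++ [true] ∈ s

def leaves (t : Finset (List Bool)) : Finset (List Bool) :=
  t.filter fun v => ∀ w ∈ t, v <+: w → w = v

section Trees

variable {s t : Finset (List Bool)}

theorem leafCount_eq_card_leaves : leafCount t = (leaves t).card := rfl

theorem mem_leaves {v : List Bool} : v ∈ leaves t ↔ IsTreeLeaf t v := Finset.mem_filter

theorem IsBranchPoint.concat_mem {v : List Bool} (h : IsBranchPoint s v) (a : Bool) :
    v ++ [a] ∈ s := by
  cases a
  exacts [h.1, h.2]

theorem isBranchPoint_of_ne {v : List Bool} {a b : Bool} (ha : v ++ [a] ∈ s) (hb : v ++ [b] ∈ s)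
    (hab : a ≠ b) : IsBranchPoint s v := by
  cases a <;> cases b <;> simp_all [IsBranchPoint]

theorem PrefixClosed.nil_mem (hs : PrefixClosed ↑s) (hne : s.Nonempty) : [] ∈ s :=
  let ⟨v, hv⟩ := hne
  hs v hv [] List.nil_prefix

theorem exists_isTreeLeaf_of_prefix {v : List Bool} (hv : v ∈ t) :
    ∃ ℓ, v <+: ℓ ∧ IsTreeLeaf t ℓ := by
  obtain ⟨ℓ, hℓ, hmax⟩ := Finset.exists_max_image (t.filter (v <+: ·)) List.length
    ⟨v, Finset.mem_filter.mpr ⟨hv, List.prefix_rfl⟩⟩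
  obtain ⟨hℓt, hvℓ⟩ := Finset.mem_filter.mp hℓ
  refine ⟨ℓ, hvℓ, hℓt, fun w hw hℓw => ?_⟩
  exact (hℓw.eq_of_length_le (hmax w (Finset.mem_filter.mpr ⟨hw, hvℓ.trans hℓw⟩))).symm

theorem contract_nil : contract s [] = [] := rfl

theorem contract_concat (v : List Bool) (a : Bool) :
    contract s (v ++ [a]) =
      contract s v ++ if v ++ [false] ∈ s ∧ v ++ [true] ∈ s then [a] else [] := by
  unfold contract
  rw [List.length_append, List.length_singleton, List.range_succ, List.filterMap_append]
  congr 1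
  · refine List.filterMap_congr fun k hk => ?_
    rw [List.mem_range] at hk
    rw [List.take_append_of_le_length hk.le, List.getElem?_append_left hk]
  · split_ifs <;> simp_all

theorem contract_concat_of_isBranchPoint {v : List Bool} (h : IsBranchPoint s v) (a : Bool) :
    contract s (v ++ [a]) = contract s v ++ [a] := by
  unfold IsBranchPoint at h
  rw [contract_concat, if_pos h]

theorem contract_concat_of_not_isBranchPoint {v : List Bool} (h : ¬ IsBranchPoint s v)
    (a : Bool) :
    contract s (v ++ [a]) = contract s v := by
  unfold IsBranchPoint at h
  rw [contract_concat, if_neg h, List.append_nil]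

theorem contract_mono {u v : List Bool} (h : u <+: v) : contract s u <+: contract s v := by
  induction v using List.reverseRecOn with
  | nil => rw [List.prefix_nil.mp h]
  | append_singleton v a ih =>
    rcases List.prefix_concat_iff.mp h with rfl | h
    · exact List.prefix_rfl
    · exact (ih h).trans (by rw [contract_concat]; exact List.prefix_append _ _)

theorem prefix_or_prefix_of_contract_prefix (hs : PrefixClosed ↑s) {v v' : List Bool}
    (hv : v ∈ s) (hv' : v' ∈ s) (h : contract s v <+: contract s v') :
    v <+: v' ∨ v' <+: v := by
  by_contra! hnot
  obtain ⟨p, a, b, hab, hpa, hpb⟩ := exists_fork_of_not_prefix hnot.1 hnot.2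
  have hp : IsBranchPoint s p := isBranchPoint_of_ne (hs v hv _ hpa) (hs v' hv' _ hpb) hab
  have ha := contract_mono (s := s) hpa
  have hb := contract_mono (s := s) hpb
  rw [contract_concat_of_isBranchPoint hp] at ha hb
  have := (List.prefix_of_prefix_length_le (ha.trans h) hb (by simp)).eq_of_length (by simp)
  exact hab (by simpa using this)

theorem exists_prefix_contract_eq {u v : List Bool} (h : u <+: contract s v) :
    ∃ p, p <+: v ∧ contract s p = u := by
  induction v using List.reverseRecOn generalizing u with
  | nil => exact ⟨[], List.prefix_rfl, (List.prefix_nil.mp h).symm⟩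
  | append_singleton v a ih =>
    by_cases hv : IsBranchPoint s v
    · rw [contract_concat_of_isBranchPoint hv] at h
      rcases List.prefix_concat_iff.mp h with rfl | h
      · exact ⟨v ++ [a], List.prefix_rfl, contract_concat_of_isBranchPoint hv a⟩
      · obtain ⟨p, hp, rfl⟩ := ih h
        exact ⟨p, hp.trans (List.prefix_append _ _), rfl⟩
    · rw [contract_concat_of_not_isBranchPoint hv] at h
      obtain ⟨p, hp, rfl⟩ := ih h
      exact ⟨p, hp.trans (List.prefix_append _ _), rfl⟩

theorem exists_isBranchPoint_of_contract_eq_concat {v w : List Bool} {b : Bool}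
    (h : contract s v = w ++ [b]) : ∃ p, IsBranchPoint s p ∧ contract s p = w := by
  induction v using List.reverseRecOn with
  | nil => simp [contract_nil] at h
  | append_singleton v a ih =>
    by_cases hv : IsBranchPoint s v
    · rw [contract_concat_of_isBranchPoint hv] at h
      exact ⟨v, hv, (List.append_inj' h rfl).1⟩
    · exact ih (by rwa [contract_concat_of_not_isBranchPoint hv] at h)

theorem exists_leaf_or_isBranchPoint_contract_eq (hs : PrefixClosed ↑s) {v : List Bool}
    (hv : v ∈ s) : ∃ u ∈ s,
      ((∀ w ∈ s, u <+: w → w = u) ∨ IsBranchPoint s u) ∧ contract s u = contract s v := by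
  classical
  -- a longest extension of `v` with the same image cannot have a child below a non-branch point
  obtain ⟨u, hu, hmax⟩ := Finset.exists_max_image
    (s.filter fun w => v <+: w ∧ contract s w = contract s v) List.length
    ⟨v, Finset.mem_filter.mpr ⟨hv, List.prefix_rfl, rfl⟩⟩
  obtain ⟨hus, hvu, huv⟩ := Finset.mem_filter.mp hu
  refine ⟨u, hus, or_iff_not_imp_right.mpr fun hbr w hw huw => ?_, huv⟩
  by_contra hne
  obtain ⟨a, hua⟩ := exists_concat_prefix_of_prefix_of_ne huw (Ne.symm hne)
  have hcontract : contract s (u ++ [a]) = contract s v := by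
    rw [contract_concat_of_not_isBranchPoint hbr, huv]
  have := hmax (u ++ [a]) (Finset.mem_filter.mpr
    ⟨hs w hw _ hua, hvu.trans (List.prefix_append _ _), hcontract⟩)
  simp at this

theorem patricia_eq_image_contract (hs : PrefixClosed ↑s) :
    patricia s = s.image (contract s) := by
  refine (Finset.image_subset_image (Finset.filter_subset _ _)).antisymm fun w hw => ?_
  obtain ⟨v, hv, rfl⟩ := Finset.mem_image.mp hw
  obtain ⟨u, hu, hkept, huv⟩ := exists_leaf_or_isBranchPoint_contract_eq hs hv
  exact Finset.mem_image.mpr ⟨u, Finset.mem_filter.mpr ⟨hu, hkept⟩, huv⟩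

theorem fullBinTree_patricia (hs : PrefixClosed ↑s) (hne : s.Nonempty) :
    FullBinTree (patricia s) := by
  rw [patricia_eq_image_contract hs]
  refine ⟨hne.image _, ?_, ?_⟩
  · rintro _ hw u hu
    obtain ⟨v, hv, rfl⟩ := Finset.mem_image.mp hw
    obtain ⟨p, hpv, rfl⟩ := exists_prefix_contract_eq hu
    exact Finset.mem_image_of_mem _ (hs v hv p hpv)
  · have hchildren : ∀ w (b : Bool), w ++ [b] ∈ s.image (contract s) →
        ∀ a : Bool, w ++ [a] ∈ s.image (contract s) := by
      intro w b hwb a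
      obtain ⟨v, -, hv⟩ := Finset.mem_image.mp hwb
      obtain ⟨p, hp, rfl⟩ := exists_isBranchPoint_of_contract_eq_concat hv
      exact Finset.mem_image.mpr
        ⟨p ++ [a], hp.concat_mem a, contract_concat_of_isBranchPoint hp a⟩
    rintro w - (h | h) <;> exact ⟨hchildren w _ h false, hchildren w _ h true⟩

theorem leaves_patricia (hs : PrefixClosed ↑s) :
    leaves (patricia s) = (leaves s).image (contract s) := by
  rw [patricia_eq_image_contract hs]
  ext w
  simp only [Finset.mem_image, mem_leaves, IsTreeLeaf, forall_exists_index, and_imp,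
    forall_apply_eq_imp_iff₂]
  constructor
  · rintro ⟨⟨v, hv, rfl⟩, hleaf⟩
    obtain ⟨ℓ, hvℓ, hℓs, hℓ⟩ := exists_isTreeLeaf_of_prefix hv
    exact ⟨ℓ, ⟨hℓs, hℓ⟩, hleaf ℓ hℓs (contract_mono hvℓ)⟩
  · rintro ⟨v, ⟨hv, hleaf⟩, rfl⟩
    refine ⟨⟨v, hv, rfl⟩, fun v' hv' h => ?_⟩
    rcases prefix_or_prefix_of_contract_prefix hs hv hv' h with hvv' | hv'v
    · rw [hleaf v' hv' hvv']
    · exact (h.eq_of_length_le (contract_mono hv'v).length_le).symm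

theorem injOn_contract_leaves (hs : PrefixClosed ↑s) : Set.InjOn (contract s) (leaves s) := by
  intro v hv v' hv' h
  rw [Finset.mem_coe, mem_leaves] at hv hv'
  rcases prefix_or_prefix_of_contract_prefix hs hv.1 hv'.1 (h ▸ List.prefix_rfl) with
    hvv' | hv'v
  · exact (hv.2 v' hv'.1 hvv').symm
  · exact hv'.2 v hv.1 hv'v

theorem leafCount_patricia (hs : PrefixClosed ↑s) : leafCount (patricia s) = leafCount s := by
  rw [leafCount_eq_card_leaves, leaves_patricia hs,
    Finset.card_image_of_injOn (injOn_contract_leaves hs), leafCount_eq_card_leaves]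

theorem FullBinTree.isBranchPoint (ht : FullBinTree t) {v : List Bool} {a : Bool}
    (h : v ++ [a] ∈ t) : IsBranchPoint t v :=
  ht.2.2 v (ht.2.1 _ h _ (List.prefix_append _ _)) (by cases a <;> simp [h])

theorem FullBinTree.contract_eq (ht : FullBinTree t) {v : List Bool} (hv : v ∈ t) :
    contract t v = v := by
  induction v using List.reverseRecOn with
  | nil => exact contract_nil
  | append_singleton v a ih =>
    rw [contract_concat_of_isBranchPoint (ht.isBranchPoint hv),
      ih (ht.2.1 _ hv _ (List.prefix_append _ _))]

theorem FullBinTree.patricia_eq (ht : FullBinTree t) : patricia t = t := by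
  rw [patricia_eq_image_contract ht.2.1]
  calc t.image (contract t) = t.image id := Finset.image_congr fun _ hv => ht.contract_eq hv
    _ = t := Finset.image_id

theorem FullBinTree.two_le_leafCount (ht : FullBinTree t) (hne : t ≠ {[]}) :
    2 ≤ leafCount t := by
  obtain ⟨v, hv, hvnil⟩ : ∃ v ∈ t, v ≠ [] := by
    by_contra! h
    exact hne (Finset.eq_singleton_iff_unique_mem.mpr ⟨ht.2.1.nil_mem ht.1, h⟩)
  obtain ⟨a, v, rfl⟩ := List.exists_cons_of_ne_nil hvnil
  have hroot : IsBranchPoint t [] := ht.isBranchPoint (a := a) (ht.2.1 _ hv _ (by simp))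
  obtain ⟨ℓ₀, h₀, hℓ₀⟩ := exists_isTreeLeaf_of_prefix (hroot.concat_mem false)
  obtain ⟨ℓ₁, h₁, hℓ₁⟩ := exists_isTreeLeaf_of_prefix (hroot.concat_mem true)
  have hℓ : ℓ₀ ≠ ℓ₁ := by
    rintro rfl
    simpa using List.prefix_of_prefix_length_le h₀ h₁ (by simp)
  rw [leafCount_eq_card_leaves]
  exact Finset.one_lt_card.mpr ⟨ℓ₀, mem_leaves.mpr hℓ₀, ℓ₁, mem_leaves.mpr hℓ₁, hℓ⟩

theorem FullBinTree.radixTree (ht : FullBinTree t) : RadixTree t := by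
  refine ⟨ht.1, ht.2.1, or_iff_not_imp_left.mpr fun hne => ⟨ht.two_le_leafCount hne, ?_⟩⟩
  rintro _ hv - u b rfl
  exact (ht.isBranchPoint hv).concat_mem !b

end Trees

theorem patricia_maps_onto_general (n : ℕ) :
    (∀ s : Finset (List Bool), RadixTree s → leafCount s = n →
        FullBinTree (patricia s) ∧ leafCount (patricia s) = n) ∧
      (∀ t : Finset (List Bool), FullBinTree t → leafCount t = n →
        ∃ s : Finset (List Bool), RadixTree s ∧ leafCount s = n ∧ patricia s = t) :=
  ⟨fun _ hs hn => ⟨fullBinTree_patricia hs.2.1 hs.1, (leafCount_patricia hs.2.1).trans hn⟩,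
    fun t ht hn => ⟨t, ht.radixTree, hn, ht.patricia_eq⟩⟩

/-- The PATRICIA contraction `Φ` maps the set of radix sort trees with `n` leaves onto
the set of full binary trees with `n` leaves, preserving the number of leaves. -/
theorem patricia_maps_onto (n : ℕ) (hn : 1 ≤ n) :
    (∀ s : Finset (List Bool), RadixTree s → leafCount s = n →
        FullBinTree (patricia s) ∧ leafCount (patricia s) = n) ∧
      (∀ t : Finset (List Bool), FullBinTree t → leafCount t = n →
        ∃ s : Finset (List Bool), RadixTree s ∧ leafCount s = n ∧ patricia s = t) :=
  patricia_maps_onto_general n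
end

section
/- In any didendritic system with at least three labels, for any distinct labels i, j, k there is a bijection from the set of equivalence classes {⟨g,h⟩ : g,h ∈ {i,j,k}} to the vertex set of a full binary tree with exactly three leaves labeled i, j, k, which preserves the three partial orders <_L, <_R, < and maps ⟨g,g⟩ to the leaf labeled g. -/
/-- Strict prefix order on vertices of a binary tree. -/
def treeLt (u v : List Bool) : Prop := u <+: v ∧ u ≠ v

/-- `u <_L v` on a binary tree: `v` lies in the left (0-) subtree below `u`. -/
def treeLtL (u v : List Bool) : Prop := u ++ [false] <+: v

/-- `u <_R v` on a binary tree: `v` lies in the right (1-) subtree below `u`. -/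
def treeLtR (u v : List Bool) : Prop := u ++ [true] <+: v
/-- A didendritic system on the label set `N`: the set `N × N` equipped with an
equivalence relation `eqv` (whose classes are the `⟨·,·⟩`), and strict partial orders
`ltL`, `ltR`, `lt` on the classes (formalized as relations on pairs that respect `eqv`),
satisfying axioms (A)-(E). -/
structure DidendriticSystem (N : Type*) where
  eqv : N × N → N × N → Prop
  iseqv : Equivalence eqv
  ltL : N × N → N × N → Prop
  ltR : N × N → N × N → Prop
  lt : N × N → N × N → Prop
  ltL_congr : ∀ a a' b b', eqv a a' → eqv b b' → ltL a b → ltL a' b'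
  ltR_congr : ∀ a a' b b', eqv a a' → eqv b b' → ltR a b → ltR a' b'
  lt_congr : ∀ a a' b b', eqv a a' → eqv b b' → lt a b → lt a' b'
  lt_trans : ∀ a b c, lt a b → lt b c → lt a c
  lt_irrefl : ∀ a b, eqv a b → ¬ lt a b
  ltL_trans : ∀ a b c, ltL a b → ltL b c → ltL a c
  ltL_irrefl : ∀ a b, eqv a b → ¬ ltL a b
  ltR_trans : ∀ a b c, ltR a b → ltR b c → ltR a c
  ltR_irrefl : ∀ a b, eqv a b → ¬ ltR a b
  /-- (A) `(i,j) ≡ (j,i)`. -/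
  axA : ∀ i j : N, eqv (i, j) (j, i)
  /-- (B) sibling resolution for distinct labels. -/
  axB : ∀ i j : N, i ≠ j →
    (ltL (i, j) (i, i) ∧ ltR (i, j) (j, j)) ∨
      (ltR (i, j) (i, i) ∧ ltL (i, j) (j, j))
  /-- (C) the triplet property: exactly one of three alternatives holds. -/
  axC : ∀ i j k : N, i ≠ j → j ≠ k → i ≠ k →
    ((eqv (i, j) (i, k) ∧ lt (i, j) (j, k)) ∧
        ¬(eqv (j, k) (j, i) ∧ lt (j, k) (k, i)) ∧
        ¬(eqv (k, i) (k, j) ∧ lt (k, i) (i, j))) ∨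
    (¬(eqv (i, j) (i, k) ∧ lt (i, j) (j, k)) ∧
        (eqv (j, k) (j, i) ∧ lt (j, k) (k, i)) ∧
        ¬(eqv (k, i) (k, j) ∧ lt (k, i) (i, j))) ∨
    (¬(eqv (i, j) (i, k) ∧ lt (i, j) (j, k)) ∧
        ¬(eqv (j, k) (j, i) ∧ lt (j, k) (k, i)) ∧
        (eqv (k, i) (k, j) ∧ lt (k, i) (i, j)))
  /-- (D) `ltL` and `ltR` are mutually exclusive and `lt` is their union. -/
  axD : ∀ a b : N × N, ¬(ltL a b ∧ ltR a b) ∧ (lt a b ↔ ltL a b ∨ ltR a b)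
  /-- (E) left/right relations propagate down the order. -/
  axE : ∀ a b c : N × N,
    (ltL a b → lt b c → ltL a c) ∧ (ltR a b → lt b c → ltR a c)

theorem exists_append_singleton_prefix_of_treeLt {u v : List Bool} (h : treeLt u v) :
    ∃ c, u ++ [c] <+: v := by
  obtain ⟨⟨w, rfl⟩, hne⟩ := h
  cases w with
  | nil => simp at hne
  | cons c w => exact ⟨c, w, by simp⟩

theorem treeLt_cons_cons {a : Bool} {u v : List Bool} :
    treeLt (a :: u) (a :: v) ↔ treeLt u v := by
  simp [treeLt]

theorem treeLt_trichotomy (u v : List Bool) :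
    u = v ∨ treeLt u v ∨ treeLt v u ∨ ∃ w c, w ++ [c] <+: u ∧ w ++ [!c] <+: v := by
  induction u generalizing v with
  | nil =>
    cases v with
    | nil => exact Or.inl rfl
    | cons b v => exact Or.inr (Or.inl ⟨List.nil_prefix, by simp⟩)
  | cons a u ih =>
    cases v with
    | nil => exact Or.inr (Or.inr (Or.inl ⟨List.nil_prefix, by simp⟩))
    | cons b v =>
      obtain rfl | rfl := b.eq_or_eq_not a
      · rcases ih v with rfl | huv | hvu | ⟨w, c, hwu, hwv⟩
        · exact Or.inl rfl
        · exact Or.inr (Or.inl (treeLt_cons_cons.2 huv))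
        · exact Or.inr (Or.inr (Or.inl (treeLt_cons_cons.2 hvu)))
        · exact Or.inr (Or.inr (Or.inr ⟨b :: w, c, by simpa using hwu, by simpa using hwv⟩))
      · exact Or.inr (Or.inr (Or.inr ⟨[], a, by simp, by simp⟩))

theorem prefixClosed_coe_iff (t : Finset (List Bool)) :
    PrefixClosed ↑t ↔ ∀ v ∈ t, ∀ u ∈ v.inits, u ∈ t := by
  simp only [PrefixClosed, Finset.mem_coe, List.mem_inits]

def threeLeafTree (s s' : Bool) : Finset (List Bool) :=
  {[], [s], [!s], [!s, s'], [!s, !s']}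

theorem prefixClosed_threeLeafTree (s s' : Bool) : PrefixClosed ↑(threeLeafTree s s') := by
  rw [prefixClosed_coe_iff]
  cases s <;> cases s' <;> decide

theorem fullBinTree_threeLeafTree (s s' : Bool) : FullBinTree (threeLeafTree s s') := by
  refine ⟨⟨[], by simp [threeLeafTree]⟩, prefixClosed_threeLeafTree s s', ?_⟩
  cases s <;> cases s' <;> decide

theorem leafCount_threeLeafTree (s s' : Bool) : leafCount (threeLeafTree s s') = 3 := by
  cases s <;> cases s' <;> decide

theorem isTreeLeaf_threeLeafTree (s s' : Bool) :
    IsTreeLeaf (threeLeafTree s s') [s] ∧ IsTreeLeaf (threeLeafTree s s') [!s, s'] ∧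
      IsTreeLeaf (threeLeafTree s s') [!s, !s'] := by
  unfold IsTreeLeaf
  cases s <;> cases s' <;> decide

namespace DidendriticSystem

variable {N : Type*}

def ltDir (D : DidendriticSystem N) : Bool → N × N → N × N → Prop
  | false => D.ltL
  | true => D.ltR

variable {D : DidendriticSystem N} {a a' b b' d : N × N} {c : Bool}
  {t : Set (List Bool)} {ρ : List Bool → N × N}

theorem eqv_congr_iff (ha : D.eqv a a') (hb : D.eqv b b') : D.eqv a b ↔ D.eqv a' b' :=
  ⟨fun h => D.iseqv.trans (D.iseqv.trans (D.iseqv.symm ha) h) hb,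
    fun h => D.iseqv.trans (D.iseqv.trans ha h) (D.iseqv.symm hb)⟩

theorem lt_congr_iff (ha : D.eqv a a') (hb : D.eqv b b') : D.lt a b ↔ D.lt a' b' :=
  ⟨D.lt_congr _ _ _ _ ha hb, D.lt_congr _ _ _ _ (D.iseqv.symm ha) (D.iseqv.symm hb)⟩

theorem ltDir_congr (ha : D.eqv a a') (hb : D.eqv b b') (h : D.ltDir c a b) :
    D.ltDir c a' b' := by
  cases c
  exacts [D.ltL_congr _ _ _ _ ha hb h, D.ltR_congr _ _ _ _ ha hb h]

theorem ltDir_congr_iff (ha : D.eqv a a') (hb : D.eqv b b') :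
    D.ltDir c a b ↔ D.ltDir c a' b' :=
  ⟨ltDir_congr ha hb, ltDir_congr (D.iseqv.symm ha) (D.iseqv.symm hb)⟩

theorem lt_iff_exists_ltDir : D.lt a b ↔ ∃ c, D.ltDir c a b := by
  rw [(D.axD a b).2]
  constructor
  · rintro (h | h)
    exacts [⟨false, h⟩, ⟨true, h⟩]
  · rintro ⟨_ | _, h⟩
    exacts [Or.inl h, Or.inr h]

theorem lt_of_ltDir (h : D.ltDir c a b) : D.lt a b :=
  lt_iff_exists_ltDir.2 ⟨c, h⟩

theorem not_ltDir_not (h : D.ltDir c a b) : ¬ D.ltDir (!c) a b := by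
  cases c
  exacts [fun h' => (D.axD a b).1 ⟨h, h'⟩, fun h' => (D.axD a b).1 ⟨h', h⟩]

theorem ltDir_of_ltDir_of_lt (h : D.ltDir c a b) (h' : D.lt b d) : D.ltDir c a d := by
  cases c
  exacts [(D.axE a b d).1 h h', (D.axE a b d).2 h h']

theorem lt_asymm (h : D.lt a b) : ¬ D.lt b a :=
  fun h' => D.lt_irrefl a a (D.iseqv.refl a) (D.lt_trans _ _ _ h h')

theorem not_lt_of_ltDir_of_ltDir_not (hb : D.ltDir c a b) (hd : D.ltDir (!c) a d) :
    ¬ D.lt b d :=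
  fun h => not_ltDir_not (ltDir_of_ltDir_of_lt hb h) hd

theorem not_eqv_of_ltDir_of_ltDir_not (hb : D.ltDir c a b) (hd : D.ltDir (!c) a d) :
    ¬ D.eqv b d :=
  fun h => not_ltDir_not (ltDir_congr (D.iseqv.refl a) h hb) hd

theorem ltDir_of_ltDir_of_lt_of_lt (hd : D.ltDir c a d) (hab : D.lt a b) (hbd : D.lt b d) :
    D.ltDir c a b := by
  obtain ⟨e, he⟩ := lt_iff_exists_ltDir.1 hab
  obtain rfl | rfl := e.eq_or_eq_not c
  · exact he
  · exact absurd hd (by simpa using not_ltDir_not (ltDir_of_ltDir_of_lt he hbd))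

structure IsTreeEmbedding (D : DidendriticSystem N) (t : Set (List Bool))
    (ρ : List Bool → N × N) : Prop where
  prefixClosed : PrefixClosed t
  ltDir_append_singleton : ∀ v c, v ++ [c] ∈ t → D.ltDir c (ρ v) (ρ (v ++ [c]))

namespace IsTreeEmbedding

variable {u v : List Bool}

theorem ltDir_of_prefix (hρ : D.IsTreeEmbedding t ρ) (hv : v ∈ t) (h : u ++ [c] <+: v) :
    D.ltDir c (ρ u) (ρ v) := by
  induction v using List.reverseRecOn with
  | nil => simp at h
  | append_singleton v d ih =>
    rcases List.prefix_concat_iff.1 h with h | h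
    · obtain ⟨rfl, rfl⟩ : u = v ∧ c = d := by simpa using h
      exact hρ.ltDir_append_singleton u c hv
    · have hv' : v ∈ t := hρ.prefixClosed _ hv v (List.prefix_append v [d])
      exact ltDir_of_ltDir_of_lt (ih hv' h) (lt_of_ltDir (hρ.ltDir_append_singleton v d hv))

theorem lt_of_treeLt (hρ : D.IsTreeEmbedding t ρ) (hv : v ∈ t) (h : treeLt u v) :
    D.lt (ρ u) (ρ v) :=
  let ⟨_, hc⟩ := exists_append_singleton_prefix_of_treeLt h
  lt_of_ltDir (hρ.ltDir_of_prefix hv hc)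

theorem eqv_iff (hρ : D.IsTreeEmbedding t ρ) (hu : u ∈ t) (hv : v ∈ t) :
    D.eqv (ρ u) (ρ v) ↔ u = v := by
  refine ⟨fun h => ?_, fun h => h ▸ D.iseqv.refl _⟩
  rcases treeLt_trichotomy u v with rfl | huv | hvu | ⟨w, c, hwu, hwv⟩
  · rfl
  · exact absurd (hρ.lt_of_treeLt hv huv) (D.lt_irrefl _ _ h)
  · exact absurd (hρ.lt_of_treeLt hu hvu) (D.lt_irrefl _ _ (D.iseqv.symm h))
  · exact absurd h
      (not_eqv_of_ltDir_of_ltDir_not (hρ.ltDir_of_prefix hu hwu) (hρ.ltDir_of_prefix hv hwv))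

theorem lt_iff (hρ : D.IsTreeEmbedding t ρ) (hu : u ∈ t) (hv : v ∈ t) :
    D.lt (ρ u) (ρ v) ↔ treeLt u v := by
  refine ⟨fun h => ?_, hρ.lt_of_treeLt hv⟩
  rcases treeLt_trichotomy u v with rfl | huv | hvu | ⟨w, c, hwu, hwv⟩
  · exact absurd h (D.lt_irrefl _ _ (D.iseqv.refl _))
  · exact huv
  · exact absurd h (lt_asymm (hρ.lt_of_treeLt hu hvu))
  · exact absurd h
      (not_lt_of_ltDir_of_ltDir_not (hρ.ltDir_of_prefix hu hwu) (hρ.ltDir_of_prefix hv hwv))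

theorem ltDir_iff (hρ : D.IsTreeEmbedding t ρ) (hu : u ∈ t) (hv : v ∈ t) :
    D.ltDir c (ρ u) (ρ v) ↔ u ++ [c] <+: v := by
  refine ⟨fun h => ?_, hρ.ltDir_of_prefix hv⟩
  obtain ⟨d, hd⟩ := exists_append_singleton_prefix_of_treeLt ((hρ.lt_iff hu hv).1 (lt_of_ltDir h))
  obtain rfl | rfl := d.eq_or_eq_not c
  · exact hd
  · exact absurd (hρ.ltDir_of_prefix hv hd) (not_ltDir_not h)

end IsTreeEmbedding

/-- The inverse of `ρ` on classes; `[]` if `p` is equivalent to no label. -/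
noncomputable def treeVertex (D : DidendriticSystem N) (t : Set (List Bool))
    (ρ : List Bool → N × N) (p : N × N) : List Bool :=
  open Classical in if h : ∃ v ∈ t, D.eqv p (ρ v) then h.choose else []

theorem treeVertex_spec {p : N × N} (h : ∃ v ∈ t, D.eqv p (ρ v)) :
    D.treeVertex t ρ p ∈ t ∧ D.eqv p (ρ (D.treeVertex t ρ p)) := by
  rw [treeVertex, dif_pos h]
  exact h.choose_spec

namespace IsTreeEmbedding

theorem treeVertex_eq (hρ : D.IsTreeEmbedding t ρ) {p : N × N} {v : List Bool} (hv : v ∈ t)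
    (hp : D.eqv p (ρ v)) : D.treeVertex t ρ p = v :=
  have hφ := treeVertex_spec ⟨v, hv, hp⟩
  (hρ.eqv_iff hφ.1 hv).1 (D.iseqv.trans (D.iseqv.symm hφ.2) hp)

theorem treeVertex_rel_iff (hρ : D.IsTreeEmbedding t ρ) {p q : N × N}
    (hp : ∃ u ∈ t, D.eqv p (ρ u)) (hq : ∃ v ∈ t, D.eqv q (ρ v)) :
    let φ := D.treeVertex t ρ
    (φ p = φ q ↔ D.eqv p q) ∧ (D.ltL p q ↔ treeLtL (φ p) (φ q)) ∧
      (D.ltR p q ↔ treeLtR (φ p) (φ q)) ∧ (D.lt p q ↔ treeLt (φ p) (φ q)) :=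
  let ⟨hu, hp⟩ := treeVertex_spec hp
  let ⟨hv, hq⟩ := treeVertex_spec hq
  ⟨((eqv_congr_iff hp hq).trans (hρ.eqv_iff hu hv)).symm,
    (ltDir_congr_iff (c := false) hp hq).trans (hρ.ltDir_iff hu hv),
    (ltDir_congr_iff (c := true) hp hq).trans (hρ.ltDir_iff hu hv),
    (lt_congr_iff hp hq).trans (hρ.lt_iff hu hv)⟩

end IsTreeEmbedding

def tripleLabel (i j k : N) (s s' : Bool) : List Bool → N × N
  | [x] => if x = s then (i, i) else (j, k)
  | [_, y] => if y = s' then (j, j) else (k, k)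
  | _ => (i, j)

theorem isTreeEmbedding_tripleLabel {i j k : N} {s s' : Bool}
    (hii : D.ltDir s (i, j) (i, i)) (hjk : D.ltDir (!s) (i, j) (j, k))
    (hjj : D.ltDir s' (j, k) (j, j)) (hkk : D.ltDir (!s') (j, k) (k, k)) :
    D.IsTreeEmbedding ↑(threeLeafTree s s') (tripleLabel i j k s s') := by
  refine ⟨prefixClosed_threeLeafTree s s', fun v c hv => ?_⟩
  obtain ⟨rfl, rfl⟩ | ⟨rfl, rfl⟩ | ⟨rfl, rfl⟩ | ⟨rfl, rfl⟩ :
      (v = [] ∧ c = s) ∨ (v = [] ∧ c = !s) ∨ (v = [!s] ∧ c = s') ∨ (v = [!s] ∧ c = !s') := by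
    simpa [threeLeafTree, List.append_eq_cons_iff, List.cons_eq_append_iff] using hv
  all_goals simpa [tripleLabel]

def IsThreeLeafModel (D : DidendriticSystem N) (S : Set N) (t : Finset (List Bool))
    (φ : N × N → List Bool) : Prop :=
  FullBinTree t ∧ leafCount t = 3 ∧
    (∀ g ∈ S, ∀ h ∈ S, φ (g, h) ∈ t) ∧
    (∀ v ∈ t, ∃ g ∈ S, ∃ h ∈ S, φ (g, h) = v) ∧
    (∀ g h g' h' : N, g ∈ S → h ∈ S → g' ∈ S → h' ∈ S →
      (φ (g, h) = φ (g', h') ↔ D.eqv (g, h) (g', h')) ∧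
      (D.ltL (g, h) (g', h') ↔ treeLtL (φ (g, h)) (φ (g', h'))) ∧
      (D.ltR (g, h) (g', h') ↔ treeLtR (φ (g, h)) (φ (g', h'))) ∧
      (D.lt (g, h) (g', h') ↔ treeLt (φ (g, h)) (φ (g', h')))) ∧
    (∀ g ∈ S, IsTreeLeaf t (φ (g, g)))

theorem exists_ltDir_ltDir_not {i j : N} (h : i ≠ j) :
    ∃ s, D.ltDir s (i, j) (i, i) ∧ D.ltDir (!s) (i, j) (j, j) := by
  rcases D.axB i j h with h' | h'
  exacts [⟨false, h'⟩, ⟨true, h'⟩]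

theorem exists_eqv_tripleLabel {i j k : N} (s s' : Bool) (heqv : D.eqv (i, j) (i, k))
    ⦃g h : N⦄ (hg : g ∈ ({i, j, k} : Set N)) (hh : h ∈ ({i, j, k} : Set N)) :
    ∃ v ∈ (threeLeafTree s s' : Set (List Bool)), D.eqv (g, h) (tripleLabel i j k s s' v) := by
  have root {p : N × N} (hp : D.eqv p (i, j)) :
      ∃ v ∈ (threeLeafTree s s' : Set (List Bool)), D.eqv p (tripleLabel i j k s s' v) :=
    ⟨[], by simp [threeLeafTree], hp⟩
  rcases hg with hg | hg | hg <;> rcases hh with hh | hh | hh <;> rw [hg, hh]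
  · exact ⟨[s], by simp [threeLeafTree], by simpa [tripleLabel] using D.iseqv.refl (i, i)⟩
  · exact root (D.iseqv.refl _)
  · exact root (D.iseqv.symm heqv)
  · exact root (D.axA _ _)
  · exact ⟨[!s, s'], by simp [threeLeafTree], by simpa [tripleLabel] using D.iseqv.refl (j, j)⟩
  · exact ⟨[!s], by simp [threeLeafTree], by simpa [tripleLabel] using D.iseqv.refl (j, k)⟩
  · exact root (D.iseqv.trans (D.axA _ _) (D.iseqv.symm heqv))
  · exact ⟨[!s], by simp [threeLeafTree], by simpa [tripleLabel] using D.axA k j⟩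
  · exact ⟨[!s, !s'], by simp [threeLeafTree], by simpa [tripleLabel] using D.iseqv.refl (k, k)⟩

theorem exists_tripleLabel_eq {i j k : N} {s s' : Bool} {v : List Bool}
    (hv : v ∈ threeLeafTree s s') :
    ∃ g ∈ ({i, j, k} : Set N), ∃ h ∈ ({i, j, k} : Set N), tripleLabel i j k s s' v = (g, h) := by
  simp only [threeLeafTree, Finset.mem_insert, Finset.mem_singleton] at hv
  rcases hv with rfl | rfl | rfl | rfl | rfl
  · exact ⟨i, by simp, j, by simp, rfl⟩
  · exact ⟨i, by simp, i, by simp, by simp [tripleLabel]⟩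
  · exact ⟨j, by simp, k, by simp, by simp [tripleLabel]⟩
  · exact ⟨j, by simp, j, by simp, by simp [tripleLabel]⟩
  · exact ⟨k, by simp, k, by simp, by simp [tripleLabel]⟩

theorem exists_isThreeLeafModel_of_eqv_of_lt {i j k : N} (hij : i ≠ j) (hjk : j ≠ k)
    (heqv : D.eqv (i, j) (i, k)) (hlt : D.lt (i, j) (j, k)) :
    ∃ t φ, D.IsThreeLeafModel {i, j, k} t φ := by
  obtain ⟨s, hii, hij_jj⟩ := exists_ltDir_ltDir_not (D := D) hij
  obtain ⟨s', hjj, hkk⟩ := exists_ltDir_ltDir_not (D := D) hjk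
  have hρ := isTreeEmbedding_tripleLabel hii
    (ltDir_of_ltDir_of_lt_of_lt hij_jj hlt (lt_of_ltDir hjj)) hjj hkk
  have hlabel := exists_eqv_tripleLabel (D := D) s s' heqv
  set t := threeLeafTree s s'
  set ρ := tripleLabel i j k s s'
  have hleaf {g : N} {v : List Bool} (hv : IsTreeLeaf t v) (hg : ρ v = (g, g)) :
      IsTreeLeaf t (D.treeVertex t ρ (g, g)) := by
    rwa [hρ.treeVertex_eq hv.1 (hg ▸ D.iseqv.refl _)]
  obtain ⟨hi, hj, hk⟩ := isTreeLeaf_threeLeafTree s s'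
  refine ⟨t, D.treeVertex t ρ, fullBinTree_threeLeafTree s s', leafCount_threeLeafTree s s',
    fun g hg h hh => (treeVertex_spec (hlabel hg hh)).1, fun v hv => ?_,
    fun g h g' h' hg hh hg' hh' => hρ.treeVertex_rel_iff (hlabel hg hh) (hlabel hg' hh'), ?_⟩
  · obtain ⟨g, hg, h, hh, hgh⟩ := exists_tripleLabel_eq (i := i) (j := j) (k := k) hv
    exact ⟨g, hg, h, hh, hρ.treeVertex_eq hv (hgh ▸ D.iseqv.refl _)⟩
  · rintro g (rfl | rfl | rfl)
    · exact hleaf hi (by simp [ρ, tripleLabel])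
    · exact hleaf hj (by simp [ρ, tripleLabel])
    · exact hleaf hk (by simp [ρ, tripleLabel])

end DidendriticSystem

/-- In any didendritic system, for distinct labels `i, j, k` there is a bijection from
the equivalence classes `⟨g,h⟩`, `g,h ∈ {i,j,k}`, to the vertices of a full binary tree
with exactly three leaves labeled `i`, `j`, `k`, preserving the three partial orders and
mapping each `⟨g,g⟩` to the leaf labeled `g`. -/
theorem didendritic_triple_tree {N : Type*} (D : DidendriticSystem N)
    (i j k : N) (hij : i ≠ j) (hjk : j ≠ k) (hik : i ≠ k) :
    ∃ (t : Finset (List Bool)) (φ : N × N → List Bool),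
      FullBinTree t ∧ leafCount t = 3 ∧
      (∀ g ∈ ({i, j, k} : Set N), ∀ h ∈ ({i, j, k} : Set N), φ (g, h) ∈ t) ∧
      (∀ v ∈ t, ∃ g ∈ ({i, j, k} : Set N), ∃ h ∈ ({i, j, k} : Set N), φ (g, h) = v) ∧
      (∀ g h g' h' : N, g ∈ ({i, j, k} : Set N) → h ∈ ({i, j, k} : Set N) →
        g' ∈ ({i, j, k} : Set N) → h' ∈ ({i, j, k} : Set N) →
        (φ (g, h) = φ (g', h') ↔ D.eqv (g, h) (g', h')) ∧
        (D.ltL (g, h) (g', h') ↔ treeLtL (φ (g, h)) (φ (g', h'))) ∧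
        (D.ltR (g, h) (g', h') ↔ treeLtR (φ (g, h)) (φ (g', h'))) ∧
        (D.lt (g, h) (g', h') ↔ treeLt (φ (g, h)) (φ (g', h')))) ∧
      (∀ g ∈ ({i, j, k} : Set N), IsTreeLeaf t (φ (g, g))) := by
  show ∃ t φ, D.IsThreeLeafModel {i, j, k} t φ
  rcases D.axC i j k hij hjk hik with
    ⟨⟨heqv, hlt⟩, -, -⟩ | ⟨-, ⟨heqv, hlt⟩, -⟩ | ⟨-, -, ⟨heqv, hlt⟩⟩
  · exact DidendriticSystem.exists_isThreeLeafModel_of_eqv_of_lt hij hjk heqv hlt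
  · rw [Set.insert_comm i j, Set.pair_comm i k]
    exact DidendriticSystem.exists_isThreeLeafModel_of_eqv_of_lt hjk hik.symm heqv hlt
  · rw [Set.pair_comm j k, Set.insert_comm i k]
    exact DidendriticSystem.exists_isThreeLeafModel_of_eqv_of_lt hik.symm hij heqv hlt
end

section
/- Every didendritic system with a finite label set is isomorphic to a unique leaf-labeled full binary tree via a unique isomorphism: there is a bijection ψ from the equivalence classes to the vertices of a full binary tree with leaves bijectively labeled by N, preserving the partial orders <_L, <_R, < and sending each singleton class ⟨i,i⟩ to the leaf labeled i. -/
/-- `ψ` realizes the didendritic system `D` as the leaf-labeled full binary tree `t`: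
it is a bijection from the equivalence classes of `D` onto the vertices of `t`,
preserving the three partial orders, mapping each singleton class `⟨i,i⟩` to a leaf and
hitting every leaf by some singleton class (so the leaves are bijectively labeled). -/
def IsoSpec {N : Type*} (D : DidendriticSystem N)
    (t : Finset (List Bool)) (ψ : N × N → List Bool) : Prop :=
  FullBinTree t ∧
  (∀ p : N × N, ψ p ∈ t) ∧
  (∀ v ∈ t, ∃ p : N × N, ψ p = v) ∧
  (∀ p q : N × N, ψ p = ψ q ↔ D.eqv p q) ∧
  (∀ p q : N × N, D.ltL p q ↔ treeLtL (ψ p) (ψ q)) ∧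
  (∀ p q : N × N, D.ltR p q ↔ treeLtR (ψ p) (ψ q)) ∧
  (∀ p q : N × N, D.lt p q ↔ treeLt (ψ p) (ψ q)) ∧
  (∀ i : N, IsTreeLeaf t (ψ (i, i))) ∧
  (∀ v ∈ t, IsTreeLeaf t v → ∃ i : N, ψ (i, i) = v)


namespace DidendriticSystem

variable {N : Type*} (D : DidendriticSystem N)

def setoid : Setoid (N × N) := ⟨D.eqv, D.iseqv⟩

abbrev Node : Type _ := Quotient D.setoid

/-- `D.node (i, j)` is the class `⟨i, j⟩`. -/
def node (p : N × N) : D.Node := Quotient.mk D.setoid p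

abbrev leaf (i : N) : D.Node := D.node (i, i)

def liftRel (r : N × N → N × N → Prop)
    (hr : ∀ a a' b b', D.eqv a a' → D.eqv b b' → r a b → r a' b') :
    D.Node → D.Node → Prop :=
  Quotient.lift₂ r fun _ _ _ _ ha hb =>
    propext ⟨hr _ _ _ _ ha hb, hr _ _ _ _ (D.iseqv.symm ha) (D.iseqv.symm hb)⟩

instance : LT D.Node := ⟨D.liftRel D.lt D.lt_congr⟩

instance : IsStrictOrder D.Node (· < ·) where
  irrefl := by rintro ⟨a⟩; exact D.lt_irrefl a a (D.iseqv.refl a)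
  trans := by rintro ⟨a⟩ ⟨b⟩ ⟨c⟩; exact D.lt_trans a b c

instance : PartialOrder D.Node := partialOrderOfSO (· < ·)

variable {D}

def Node.ltL : D.Node → D.Node → Prop := D.liftRel D.ltL D.ltL_congr

def Node.ltR : D.Node → D.Node → Prop := D.liftRel D.ltR D.ltR_congr

variable {x y z : D.Node} {p q : N × N} {i j k m : N}

theorem node_lt_node : D.node p < D.node q ↔ D.lt p q := Iff.rfl

theorem node_ltL_node : (D.node p).ltL (D.node q) ↔ D.ltL p q := Iff.rfl

theorem node_ltR_node : (D.node p).ltR (D.node q) ↔ D.ltR p q := Iff.rfl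

theorem node_surjective : Function.Surjective D.node := Quotient.mk_surjective

theorem node_eq_node_iff : D.node p = D.node q ↔ D.eqv p q := Quotient.eq

theorem Node.lt_of_ltR (h : x.ltR y) : x < y := by
  obtain ⟨p, rfl⟩ := node_surjective x
  obtain ⟨q, rfl⟩ := node_surjective y
  exact (D.axD p q).2.2 (Or.inr h)

theorem Node.ltL_iff : x.ltL y ↔ x < y ∧ ¬ x.ltR y := by
  obtain ⟨p, rfl⟩ := node_surjective x
  obtain ⟨q, rfl⟩ := node_surjective y
  have := D.axD p q
  rw [node_ltL_node, node_lt_node, node_ltR_node]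
  tauto

theorem Node.ltR_iff_of_lt_of_le (hxy : x < y) (hyz : y ≤ z) : x.ltR y ↔ x.ltR z := by
  rcases hyz.eq_or_lt with rfl | hyz
  · rfl
  obtain ⟨p, rfl⟩ := node_surjective x
  obtain ⟨q, rfl⟩ := node_surjective y
  obtain ⟨r, rfl⟩ := node_surjective z
  have hE := D.axE p q r
  have hpq := D.axD p q
  have hpr := D.axD p r
  rw [node_lt_node] at hxy hyz
  rw [node_ltR_node, node_ltR_node]
  tauto

variable (D)

theorem node_swap (i j : N) : D.node (i, j) = D.node (j, i) :=
  Quotient.sound (D.axA i j)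

theorem node_lt_leaf_left (h : i ≠ j) : D.node (i, j) < D.leaf i := by
  have := D.axD (i, j) (i, i)
  rcases D.axB i j h with ⟨h', -⟩ | ⟨h', -⟩ <;> tauto

theorem node_le_leaf_left (i j : N) : D.node (i, j) ≤ D.leaf i := by
  rcases eq_or_ne i j with rfl | h
  · exact le_rfl
  · exact (D.node_lt_leaf_left h).le

theorem node_le_leaf_right (i j : N) : D.node (i, j) ≤ D.leaf j :=
  D.node_swap i j ▸ D.node_le_leaf_left j i

theorem node_ltR_leaf_iff (h : i ≠ j) :
    (D.node (i, j)).ltR (D.leaf i) ↔ ¬ (D.node (i, j)).ltR (D.leaf j) := by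
  have hi := D.axD (i, j) (i, i)
  have hj := D.axD (i, j) (j, j)
  rcases D.axB i j h with h' | h' <;> tauto

theorem node_triplet (hij : i ≠ j) (hjk : j ≠ k) (hik : i ≠ k) :
    (D.node (i, j) = D.node (i, k) ∧ D.node (i, j) < D.node (j, k)) ∨
    (D.node (j, k) = D.node (j, i) ∧ D.node (j, k) < D.node (k, i)) ∨
    (D.node (k, i) = D.node (k, j) ∧ D.node (k, i) < D.node (i, j)) := by
  rcases D.axC i j k hij hjk hik with ⟨⟨h, h'⟩, -⟩ | ⟨-, ⟨h, h'⟩, -⟩ | ⟨-, -, ⟨h, h'⟩⟩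
  exacts [Or.inl ⟨Quotient.sound h, h'⟩, Or.inr (Or.inl ⟨Quotient.sound h, h'⟩),
    Or.inr (Or.inr ⟨Quotient.sound h, h'⟩)]

theorem le_total_node_left (i j k : N) :
    D.node (i, j) ≤ D.node (i, k) ∨ D.node (i, k) ≤ D.node (i, j) := by
  rcases eq_or_ne j k with rfl | hjk
  · exact Or.inl le_rfl
  rcases eq_or_ne i j with rfl | hij
  · exact Or.inr (D.node_le_leaf_left i k)
  rcases eq_or_ne i k with rfl | hik
  · exact Or.inl (D.node_le_leaf_left i j)
  rcases D.node_triplet hij hjk hik with ⟨h, -⟩ | ⟨h, h'⟩ | ⟨-, h'⟩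
  · exact Or.inl h.le
  · left
    rw [D.node_swap i j, ← h, D.node_swap i k]
    exact h'.le
  · right
    rw [D.node_swap i k]
    exact h'.le

variable {D}

theorem not_node_lt_of_le_leaf (hij : i ≠ j) (hi : x ≤ D.leaf i) (hj : x ≤ D.leaf j) :
    ¬ D.node (i, j) < x := by
  intro h
  have := D.node_ltR_leaf_iff hij
  rw [← Node.ltR_iff_of_lt_of_le h hi, ← Node.ltR_iff_of_lt_of_le h hj] at this
  tauto

theorem not_leaf_lt (i : N) (x : D.Node) : ¬ D.leaf i < x := by
  intro h
  obtain ⟨⟨k, l⟩, rfl⟩ := node_surjective x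
  have hk : D.leaf i < D.leaf k := h.trans_le (D.node_le_leaf_left k l)
  have hik : i ≠ k := by rintro rfl; exact hk.false
  exact not_node_lt_of_le_leaf hik le_rfl hk.le (D.node_lt_leaf_left hik)

theorem exists_eq_node_of_le_leaf (h : x ≤ D.leaf m) : ∃ k, x = D.node (m, k) := by
  obtain ⟨⟨i, j⟩, rfl⟩ := node_surjective x
  rcases h.eq_or_lt with h | h
  · exact ⟨m, h⟩
  rcases eq_or_ne i m with rfl | him
  · exact ⟨j, rfl⟩
  rcases eq_or_ne j m with rfl | hjm
  · exact ⟨i, D.node_swap i j⟩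
  have hij : i ≠ j := by rintro rfl; exact not_leaf_lt i _ h
  rcases D.node_triplet hij hjm him with ⟨h', -⟩ | ⟨h', -⟩ | ⟨-, h'⟩
  · exact ⟨i, h'.trans (D.node_swap i m)⟩
  · exact ⟨j, by rw [D.node_swap i j, ← h', node_swap]⟩
  · exact absurd h' (not_node_lt_of_le_leaf him.symm h.le (D.node_le_leaf_left i j))

theorem le_total_of_le (hx : x ≤ z) (hy : y ≤ z) : x ≤ y ∨ y ≤ x := by
  obtain ⟨⟨m, n⟩, rfl⟩ := node_surjective z
  obtain ⟨a, rfl⟩ := exists_eq_node_of_le_leaf (hx.trans (D.node_le_leaf_left m n))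
  obtain ⟨b, rfl⟩ := exists_eq_node_of_le_leaf (hy.trans (D.node_le_leaf_left m n))
  exact D.le_total_node_left m a b

theorem exists_branch (hxy : ¬ x ≤ y) (hyx : ¬ y ≤ x) :
    ∃ z, z < x ∧ z < y ∧ (z.ltR x ↔ ¬ z.ltR y) := by
  obtain ⟨⟨i, j⟩, rfl⟩ := node_surjective x
  obtain ⟨⟨k, l⟩, rfl⟩ := node_surjective y
  have hik : i ≠ k := by rintro rfl; exact (D.le_total_node_left i j l).elim hxy hyx
  have hxz : ¬ D.node (i, j) ≤ D.node (i, k) := fun h =>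
    (le_total_of_le (h.trans (D.node_le_leaf_right i k)) (D.node_le_leaf_left k l)).elim hxy hyx
  have hyz : ¬ D.node (k, l) ≤ D.node (i, k) := fun h =>
    (le_total_of_le (h.trans (D.node_le_leaf_left i k)) (D.node_le_leaf_left i j)).elim hyx hxy
  have hzx : D.node (i, k) < D.node (i, j) := lt_of_le_not_ge
    ((le_total_of_le (D.node_le_leaf_left i k) (D.node_le_leaf_left i j)).resolve_right hxz) hxz
  have hzy : D.node (i, k) < D.node (k, l) := lt_of_le_not_ge
    ((le_total_of_le (D.node_le_leaf_right i k) (D.node_le_leaf_left k l)).resolve_right hyz) hyz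
  refine ⟨_, hzx, hzy, ?_⟩
  rw [Node.ltR_iff_of_lt_of_le hzx (D.node_le_leaf_left i j),
    Node.ltR_iff_of_lt_of_le hzy (D.node_le_leaf_left k l)]
  exact D.node_ltR_leaf_iff hik

theorem exists_ltL_and_exists_ltR (h : x < y) : (∃ a, x.ltL a) ∧ ∃ b, x.ltR b := by
  obtain ⟨⟨i, j⟩, rfl⟩ := node_surjective x
  have hij : i ≠ j := by rintro rfl; exact not_leaf_lt i y h
  rcases D.axB i j hij with ⟨hL, hR⟩ | ⟨hR, hL⟩
  exacts [⟨⟨D.leaf i, hL⟩, D.leaf j, hR⟩, ⟨⟨D.leaf j, hL⟩, D.leaf i, hR⟩]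

noncomputable def depth (x : D.Node) : ℕ := (Set.Iio x).ncard

open Classical in
noncomputable def word (x : D.Node) : List Bool :=
  (List.range (depth x)).map fun k => decide (∃ y < x, depth y = k ∧ y.ltR x)

theorem length_word (x : D.Node) : (word x).length = depth x := by
  simp [word]

section Finite

variable [Finite N] {n : ℕ}

theorem depth_lt_depth (h : x < y) : depth x < depth y :=
  Set.ncard_lt_ncard (Set.Iio_ssubset_Iio h)

theorem depth_injOn (x : D.Node) : Set.InjOn depth (Set.Iio x) := by
  intro y hy z hz h
  rcases le_total_of_le (le_of_lt hy) (le_of_lt hz) with h' | h'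
  · exact eq_of_le_of_not_lt h' fun hlt => (depth_lt_depth hlt).ne h
  · exact (eq_of_le_of_not_lt h' fun hlt => (depth_lt_depth hlt).ne h.symm).symm

theorem depth_image_Iio (x : D.Node) : depth '' Set.Iio x = Set.Iio (depth x) := by
  refine Set.eq_of_subset_of_ncard_le (Set.image_subset_iff.2 fun y hy => depth_lt_depth hy) ?_
  rw [Set.ncard_Iio_nat, (depth_injOn x).ncard_image]
  rfl

theorem exists_lt_depth_eq (hn : n < depth x) : ∃ y < x, depth y = n := by
  rw [← Set.mem_Iio, ← depth_image_Iio] at hn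
  exact hn

open Classical in
theorem getElem?_word (h : y < x) : (word x)[depth y]? = some (decide (y.ltR x)) := by
  simp only [word, List.getElem?_map, List.getElem?_range (depth_lt_depth h), Option.map_some,
    Option.some.injEq, decide_eq_decide]
  exact ⟨fun ⟨y', hy', hd, hR⟩ => depth_injOn x hy' h hd ▸ hR, fun hR => ⟨y, h, rfl, hR⟩⟩

open Classical in
theorem word_append_prefix (h : y < x) : word y ++ [decide (y.ltR x)] <+: word x := by
  rw [List.prefix_iff_getElem?]
  intro k hk
  rw [← List.getElem?_eq_getElem]
  rw [List.length_append, length_word, List.length_singleton, Nat.lt_succ_iff] at hk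
  rcases hk.lt_or_eq with hk | rfl
  · obtain ⟨z, hzy, rfl⟩ := exists_lt_depth_eq hk
    rw [List.getElem?_append_left (by rwa [length_word]), getElem?_word hzy,
      getElem?_word (hzy.trans h), Node.ltR_iff_of_lt_of_le hzy h.le]
  · rw [getElem?_word h, ← length_word, List.getElem?_concat_length]

theorem word_prefix_word_iff : word y <+: word x ↔ y ≤ x := by
  refine ⟨fun h => ?_, fun h => ?_⟩
  · by_contra hyx
    by_cases hxy : x ≤ y
    · have := h.length_le
      rw [length_word, length_word] at this
      exact this.not_gt (depth_lt_depth (lt_of_le_not_ge hxy hyx))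
    · obtain ⟨z, hzy, hzx, hside⟩ := exists_branch hyx hxy
      obtain ⟨t, ht⟩ := h
      have hz := getElem?_word hzx
      rw [← ht, List.getElem?_append_left (by rw [length_word]; exact depth_lt_depth hzy),
        getElem?_word hzy] at hz
      simp only [Option.some.injEq, decide_eq_decide] at hz
      tauto
  · rcases h.eq_or_lt with rfl | h
    · exact List.prefix_refl _
    · exact (List.prefix_append _ _).trans (word_append_prefix h)

theorem word_injective : Function.Injective (word : D.Node → List Bool) := fun _ _ h =>
  le_antisymm (word_prefix_word_iff.1 (h ▸ List.prefix_refl _))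
    (word_prefix_word_iff.1 (h ▸ List.prefix_refl _))

open Classical in
theorem word_append_prefix_iff {b : Bool} :
    word x ++ [b] <+: word y ↔ x < y ∧ decide (x.ltR y) = b := by
  refine ⟨fun h => ?_, fun ⟨hxy, hb⟩ => hb ▸ word_append_prefix hxy⟩
  have hxy : x < y := by
    refine lt_of_le_of_ne (word_prefix_word_iff.1 ((List.prefix_append _ _).trans h)) ?_
    rintro rfl
    simpa using h.length_le
  refine ⟨hxy, ?_⟩
  have := (List.prefix_of_prefix_length_le (word_append_prefix hxy) h (by simp)).eq_of_length
    (by simp)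
  simpa using this

theorem lt_iff_treeLt_word : x < y ↔ treeLt (word x) (word y) := by
  rw [lt_iff_le_and_ne, treeLt, word_prefix_word_iff, word_injective.ne_iff]

open Classical in
theorem ltR_iff_treeLtR_word : x.ltR y ↔ treeLtR (word x) (word y) := by
  rw [treeLtR, word_append_prefix_iff, decide_eq_true_iff]
  exact ⟨fun h => ⟨Node.lt_of_ltR h, h⟩, And.right⟩

open Classical in
theorem ltL_iff_treeLtL_word : x.ltL y ↔ treeLtL (word x) (word y) := by
  rw [treeLtL, word_append_prefix_iff, decide_eq_false_iff_not, Node.ltL_iff]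

end Finite

section Tree

variable [Fintype N]

variable (D) in
noncomputable def tree : Finset (List Bool) :=
  Finset.univ.image (word ∘ D.node)

theorem mem_tree {v : List Bool} : v ∈ D.tree ↔ ∃ x : D.Node, word x = v := by
  simp [tree, node_surjective.exists]

theorem prefixClosed_tree : PrefixClosed (D.tree : Set (List Bool)) := by
  intro v hv u hu
  simp only [Finset.mem_coe, mem_tree] at hv ⊢
  obtain ⟨x, rfl⟩ := hv
  rcases hu.length_le.lt_or_eq with hlt | heq
  · rw [length_word] at hlt
    obtain ⟨y, hyx, hy⟩ := exists_lt_depth_eq hlt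
    have hyu : word y <+: u :=
      List.prefix_of_prefix_length_le (word_prefix_word_iff.2 hyx.le) hu (by simp [length_word, hy])
    exact ⟨y, hyu.eq_of_length (by simp [length_word, hy])⟩
  · exact ⟨x, (hu.eq_of_length heq).symm⟩

theorem fullBinTree_tree [Nonempty N] : FullBinTree D.tree := by
  refine ⟨⟨word (D.leaf (Classical.arbitrary N)), mem_tree.2 ⟨_, rfl⟩⟩, prefixClosed_tree, ?_⟩
  intro v hv hchild
  obtain ⟨x, rfl⟩ := mem_tree.1 hv
  obtain ⟨b, hb⟩ : ∃ b, word x ++ [b] ∈ D.tree := hchild.elim (⟨false, ·⟩) (⟨true, ·⟩)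
  obtain ⟨y, hy⟩ := mem_tree.1 hb
  have hxy : x < y := (word_append_prefix_iff (b := b) |>.1 (by simp [hy])).1
  obtain ⟨⟨a, ha⟩, c, hc⟩ := exists_ltL_and_exists_ltR hxy
  exact ⟨prefixClosed_tree _ (mem_tree.2 ⟨a, rfl⟩) _ (ltL_iff_treeLtL_word.1 ha),
    prefixClosed_tree _ (mem_tree.2 ⟨c, rfl⟩) _ (ltR_iff_treeLtR_word.1 hc)⟩

theorem isTreeLeaf_word_leaf (i : N) : IsTreeLeaf D.tree (word (D.leaf i)) := by
  refine ⟨mem_tree.2 ⟨_, rfl⟩, fun w hw hpre => ?_⟩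
  obtain ⟨x, rfl⟩ := mem_tree.1 hw
  rcases (word_prefix_word_iff.1 hpre).eq_or_lt with h | h
  · rw [h]
  · exact absurd h (not_leaf_lt i x)

theorem exists_word_leaf_eq {v : List Bool} (hv : IsTreeLeaf D.tree v) :
    ∃ i, word (D.leaf i) = v := by
  obtain ⟨x, rfl⟩ := mem_tree.1 hv.1
  obtain ⟨⟨i, j⟩, rfl⟩ := node_surjective x
  exact ⟨i, hv.2 _ (mem_tree.2 ⟨_, rfl⟩) (word_prefix_word_iff.2 (D.node_le_leaf_left i j))⟩

theorem isoSpec_tree [Nonempty N] : IsoSpec D D.tree (word ∘ D.node) :=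
  ⟨fullBinTree_tree, fun _ => mem_tree.2 ⟨_, rfl⟩, fun _ hv => by simpa [tree] using hv,
    fun _ _ => word_injective.eq_iff.trans node_eq_node_iff,
    fun p q => ltL_iff_treeLtL_word (x := D.node p) (y := D.node q),
    fun p q => ltR_iff_treeLtR_word (x := D.node p) (y := D.node q),
    fun p q => lt_iff_treeLt_word (x := D.node p) (y := D.node q), isTreeLeaf_word_leaf,
    fun _ _ hv => exists_word_leaf_eq hv⟩

end Tree

end DidendriticSystem

theorem treeLt.length_lt {u v : List Bool} (h : treeLt u v) : u.length < v.length :=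
  lt_of_le_of_ne h.1.length_le fun e => h.2 (h.1.eq_of_length e)

namespace IsoSpec

variable {N : Type*} {D : DidendriticSystem N} {t t' : Finset (List Bool)}
  {ψ φ : N × N → List Bool} {p q : N × N}

theorem mem_iff (h : IsoSpec D t ψ) {v : List Bool} : v ∈ t ↔ ∃ p, ψ p = v :=
  ⟨h.2.2.1 v, fun ⟨p, hp⟩ => hp ▸ h.2.1 p⟩

theorem lt_iff (h : IsoSpec D t ψ) : D.lt p q ↔ treeLt (ψ p) (ψ q) :=
  h.2.2.2.2.2.2.1 p q

theorem exists_eq_of_prefix (h : IsoSpec D t ψ) {u : List Bool} (hu : u <+: ψ p) :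
    ∃ q, ψ q = u :=
  h.mem_iff.1 (h.1.2.1 _ (h.mem_iff.2 ⟨p, rfl⟩) u hu)

open Classical in
theorem append_prefix (h : IsoSpec D t ψ) (hqp : D.lt q p) :
    ψ q ++ [decide (D.ltR q p)] <+: ψ p := by
  obtain ⟨-, -, -, -, hL, hR, -⟩ := h
  unfold treeLtL at hL
  unfold treeLtR at hR
  by_cases hqp' : D.ltR q p
  · simpa [hqp'] using (hR q p).1 hqp'
  · have hL' : D.ltL q p := ((D.axD q p).2.1 hqp).resolve_right hqp'
    simpa [hqp'] using (hL q p).1 hL'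

open Classical in
theorem eq_append_of_covBy (h : IsoSpec D t ψ) (hqp : D.lt q p)
    (hcov : ∀ s, D.lt q s → ¬ D.lt s p) : ψ p = ψ q ++ [decide (D.ltR q p)] := by
  obtain ⟨s, hs⟩ := h.exists_eq_of_prefix (h.append_prefix hqp)
  have hqs : D.lt q s := h.lt_iff.2 ⟨hs ▸ List.prefix_append _ _, by simp [hs]⟩
  by_contra hne
  exact hcov s hqs (h.lt_iff.2 ⟨hs ▸ h.append_prefix hqp, hs ▸ Ne.symm hne⟩)

theorem exists_covBy (h : IsoSpec D t ψ) (hp : ψ p ≠ []) :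
    ∃ q, D.lt q p ∧ (∀ s, D.lt q s → ¬ D.lt s p) ∧ (ψ q).length < (ψ p).length := by
  obtain ⟨q, hq⟩ := h.exists_eq_of_prefix (List.dropLast_prefix (ψ p))
  have hlen : (ψ q).length + 1 = (ψ p).length := by
    have := List.length_pos_of_ne_nil hp
    rw [hq, List.length_dropLast]
    omega
  refine ⟨q, h.lt_iff.2 ⟨hq ▸ List.dropLast_prefix _, fun e => by rw [e] at hlen; omega⟩,
    fun s hqs hsp => ?_, by omega⟩
  have := (h.lt_iff.1 hqs).length_lt
  have := (h.lt_iff.1 hsp).length_lt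
  omega

theorem eq_nil_iff (h : IsoSpec D t ψ) : ψ p = [] ↔ ∀ q, ¬ D.lt q p := by
  refine ⟨fun hp q hqp => ?_, fun hp => ?_⟩
  · have := (h.lt_iff.1 hqp).length_lt
    simp [hp] at this
  · by_contra hne
    obtain ⟨q, hqp, -⟩ := h.exists_covBy hne
    exact hp q hqp

theorem unique (h : IsoSpec D t ψ) (h' : IsoSpec D t' φ) : (t, ψ) = (t', φ) := by
  have hψ : ψ = φ := by
    funext p
    induction hn : (ψ p).length using Nat.strong_induction_on generalizing p with
    | _ n ih =>
      by_cases hp : ψ p = []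
      · rw [hp, eq_comm, h'.eq_nil_iff, ← h.eq_nil_iff, hp]
      · obtain ⟨q, hqp, hcov, hlen⟩ := h.exists_covBy hp
        rw [h.eq_append_of_covBy hqp hcov, h'.eq_append_of_covBy hqp hcov,
          ih _ (hn ▸ hlen) q rfl]
  subst hψ
  congr 1
  ext v
  rw [h.mem_iff, h'.mem_iff]

end IsoSpec

/-- Every didendritic system with a finite label set is isomorphic, via a unique
isomorphism, to a unique leaf-labeled full binary tree. -/
theorem didendritic_finite_iso_tree {N : Type} [Fintype N] [Nonempty N]
    (D : DidendriticSystem N) :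
    ∃! tψ : Finset (List Bool) × (N × N → List Bool), IsoSpec D tψ.1 tψ.2 :=
  ⟨(D.tree, DidendriticSystem.word ∘ D.node), D.isoSpec_tree, fun _ h => h.unique D.isoSpec_tree⟩
end
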